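/- arXiv:2602.04836 — 3 statements merged into one kernel-verified Lean document; each statement's English description precedes it below -/
import Mathlib

section
/- For the logistic sigmoid σ(t) = e^t/(1+e^t), for any real x ≤ 0, integer k ≥ 1, and real α ≥ 2, the product f(x) = ∏_{i=1}^k σ(x - iα) satisfies f(x) ≥ (1/5)·e^{kx}·exp(-(α/2)·k(k+1)). -/
/-!
The numerators multiply to `exp (k x - α k (k + 1) / 2)`, so it suffices
to bound the product of denominators by `5`. By `1 + t ≤ eᵗ` that product is at most
`exp (∑ exp (x - i α))`, and for `x ≤ 0` the sum is dominated by the geometric series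
`∑ (e^{-α})^i ≤ e^{-α} / (1 - e^{-α})`, which is at most `1` because `e^{-α} ≤ 1/2`; finally `e ≤ 5`.
-/

open Finset Real

lemma sum_Icc_one_natCast (k : ℕ) : ∑ i ∈ Icc 1 k, (i : ℝ) = k * (k + 1) / 2 := by
  induction k with
  | zero => simp
  | succ n ih =>
    rw [sum_Icc_succ_top (by omega), ih]
    push_cast
    ring

lemma prod_exp_sub_nat_mul (x α : ℝ) (k : ℕ) :
    ∏ i ∈ Icc 1 k, exp (x - i * α) = exp (k * x) * exp (-(α / 2) * k * (k + 1)) := by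
  rw [← exp_sum, ← exp_add, sum_sub_distrib, ← sum_mul, sum_Icc_one_natCast, sum_const,
    Nat.card_Icc, Nat.add_sub_cancel, nsmul_eq_mul]
  ring_nf

lemma sum_exp_sub_nat_mul_le {x α : ℝ} (hx : x ≤ 0) (hα : 0 < α) (k : ℕ) :
    ∑ i ∈ Icc 1 k, exp (x - i * α) ≤ exp (-α) / (1 - exp (-α)) := by
  have hr : exp (-α) < 1 := exp_lt_one_iff.2 (by linarith)
  calc ∑ i ∈ Icc 1 k, exp (x - i * α)
      ≤ ∑ i ∈ Ico 1 (k + 1), exp (-α) ^ i := by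
        rw [Ico_add_one_right_eq_Icc]
        refine sum_le_sum fun i _ => ?_
        rw [← exp_nat_mul, exp_le_exp]
        linarith
    _ ≤ exp (-α) ^ 1 / (1 - exp (-α)) := geom_sum_Ico_le_of_lt_one (exp_pos _).le hr
    _ = exp (-α) / (1 - exp (-α)) := by rw [pow_one]

lemma prod_one_add_exp_sub_nat_mul_le_five {x α : ℝ} (hx : x ≤ 0) (hα : 2 ≤ α) (k : ℕ) :
    ∏ i ∈ Icc 1 k, (1 + exp (x - i * α)) ≤ 5 := by
  have hr : exp (-α) ≤ 1 / 2 := by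
    rw [exp_neg, inv_le_comm₀ (exp_pos _) (by norm_num)]
    linarith [add_one_le_exp α]
  have hgeom : exp (-α) / (1 - exp (-α)) ≤ 1 := by
    rw [div_le_one (by linarith)]
    linarith
  calc ∏ i ∈ Icc 1 k, (1 + exp (x - i * α))
      ≤ exp (∑ i ∈ Icc 1 k, exp (x - i * α)) := prod_one_add_le_exp_sum _ fun _ => (exp_pos _).le
    _ ≤ exp 1 := exp_le_exp.2 ((sum_exp_sub_nat_mul_le hx (by linarith) k).trans hgeom)
    _ ≤ 5 := by linarith [exp_one_lt_d9]

theorem stmt_1_general (x α : ℝ) (k : ℕ) (hx : x ≤ 0) (hα : 2 ≤ α) :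
    (1 / 5) * Real.exp (k * x) * Real.exp (-(α / 2) * k * (k + 1))
      ≤ ∏ i ∈ Finset.Icc 1 k, Real.exp (x - i * α) / (1 + Real.exp (x - i * α)) := by
  rw [prod_div_distrib, prod_exp_sub_nat_mul, mul_assoc, one_div_mul_eq_div]
  exact div_le_div_of_nonneg_left (by positivity)
    (prod_pos fun i _ => by positivity) (prod_one_add_exp_sub_nat_mul_le_five hx hα k)

theorem stmt_1 (x α : ℝ) (k : ℕ) (hx : x ≤ 0) (hk : 1 ≤ k) (hα : 2 ≤ α) :
    (1 / 5) * Real.exp (k * x) * Real.exp (-(α / 2) * k * (k + 1))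
      ≤ ∏ i ∈ Finset.Icc 1 k, Real.exp (x - i * α) / (1 + Real.exp (x - i * α)) :=
  stmt_1_general x α k hx hα
end

section
/- For the logistic sigmoid σ and real α ≥ 2, if x ≥ kα for an integer k ≥ 1, then 1/4 ≤ ∏_{i=1}^k σ(x - iα) ≤ 1. -/
/-!
Bound each factor below by `exp (-exp (-t)) ≤ σ t` (from `1 + u ≤ exp u`), so the product is at
least `exp (-S)` with `S = ∑ exp (i α - x)`. Since `x ≥ k α`, the terms of `S` are dominated by a
geometric series of ratio `exp (-α) ≤ exp (-2) ≤ 1/4`, so `S ≤ 4/3 < log 4`.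
-/

open Finset Real

lemma exp_div_one_add_exp (t : ℝ) : exp t / (1 + exp t) = sigmoid t := by
  rw [sigmoid_def, exp_neg]
  field_simp
  ring

lemma exp_neg_exp_neg_le_sigmoid (t : ℝ) : exp (-exp (-t)) ≤ sigmoid t := by
  rw [sigmoid_def, exp_neg (exp (-t))]
  exact inv_anti₀ (by positivity) (by linarith [add_one_le_exp (exp (-t))])

lemma exp_neg_sum_exp_neg_le_prod_sigmoid {ι : Type*} (s : Finset ι) (t : ι → ℝ) :
    exp (-∑ i ∈ s, exp (-t i)) ≤ ∏ i ∈ s, sigmoid (t i) := by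
  rw [← sum_neg_distrib, exp_sum]
  exact prod_le_prod (fun i _ ↦ (exp_pos _).le) fun i _ ↦ exp_neg_exp_neg_le_sigmoid (t i)

lemma sum_Icc_one_tsub_eq_sum_range {M : Type*} [AddCommMonoid M] (f : ℕ → M) (k : ℕ) :
    ∑ i ∈ Icc 1 k, f (k - i) = ∑ j ∈ range k, f j :=
  sum_nbij' (k - ·) (k - ·) (by intro i hi; simp only [mem_Icc, mem_range] at hi ⊢; omega)
    (by intro j hj; simp only [mem_Icc, mem_range] at hj ⊢; omega)
    (by intro i hi; simp only [mem_Icc] at hi; omega)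
    (by intro j hj; simp only [mem_range] at hj; omega) fun _ _ ↦ rfl

lemma sum_Icc_exp_sub_le {x α : ℝ} {k : ℕ} (hα : 0 < α) (hx : k * α ≤ x) :
    ∑ i ∈ Icc 1 k, exp (-(x - i * α)) ≤ (1 - exp (-α))⁻¹ := by
  have hterm : ∀ i ∈ Icc 1 k, exp (-(x - i * α)) ≤ exp (-α) ^ (k - i) := by
    intro i hi
    have hik : (i : ℝ) ≤ k := by exact_mod_cast (mem_Icc.mp hi).2
    rw [← exp_nat_mul, Nat.cast_sub (mem_Icc.mp hi).2, exp_le_exp]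
    nlinarith
  calc ∑ i ∈ Icc 1 k, exp (-(x - i * α))
      ≤ ∑ i ∈ Icc 1 k, exp (-α) ^ (k - i) := sum_le_sum hterm
    _ = ∑ j ∈ range k, exp (-α) ^ j := sum_Icc_one_tsub_eq_sum_range _ k
    _ ≤ (1 - exp (-α))⁻¹ := by
      simpa [← range_eq_Ico] using
        geom_sum_Ico_le_of_lt_one (m := 0) (n := k) (exp_pos _).le (exp_lt_one_iff.mpr (by linarith))

lemma one_sub_exp_neg_inv_le_log_four {α : ℝ} (hα : 2 ≤ α) : (1 - exp (-α))⁻¹ ≤ log 4 := by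
  have hexp : exp (-α) ≤ 1 / 4 := by
    have h2 : 4 ≤ exp 2 := by
      rw [show (2 : ℝ) = 1 + 1 by norm_num, exp_add]
      nlinarith [add_one_le_exp (1 : ℝ)]
    rw [exp_neg, inv_le_comm₀ (exp_pos _) (by norm_num)]
    calc (1 / 4 : ℝ)⁻¹ = 4 := by norm_num
      _ ≤ exp 2 := h2
      _ ≤ exp α := exp_le_exp.mpr hα
  have hlog : 4 / 3 < log 4 := by
    rw [show (4 : ℝ) = 2 ^ 2 by norm_num, log_pow]
    linarith [log_two_gt_d9]
  calc (1 - exp (-α))⁻¹ ≤ (1 - 1 / 4)⁻¹ := inv_anti₀ (by norm_num) (by linarith)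
    _ ≤ log 4 := by linarith

theorem stmt_2_general (x α : ℝ) (k : ℕ) (hα : 2 ≤ α) (hx : k * α ≤ x) :
    1 / 4 ≤ (∏ i ∈ Finset.Icc 1 k, Real.exp (x - i * α) / (1 + Real.exp (x - i * α)))
      ∧ (∏ i ∈ Finset.Icc 1 k, Real.exp (x - i * α) / (1 + Real.exp (x - i * α))) ≤ 1 := by
  simp only [exp_div_one_add_exp]
  refine ⟨?_, prod_le_one (fun i _ ↦ sigmoid_nonneg _) fun i _ ↦ sigmoid_le_one _⟩
  have hsum : ∑ i ∈ Icc 1 k, exp (-(x - i * α)) ≤ log 4 :=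
    (sum_Icc_exp_sub_le (by linarith) hx).trans (one_sub_exp_neg_inv_le_log_four hα)
  calc (1 / 4 : ℝ) = exp (-log 4) := by rw [exp_neg, exp_log (by norm_num), one_div]
    _ ≤ exp (-∑ i ∈ Icc 1 k, exp (-(x - i * α))) := exp_le_exp.mpr (neg_le_neg hsum)
    _ ≤ ∏ i ∈ Icc 1 k, sigmoid (x - i * α) := exp_neg_sum_exp_neg_le_prod_sigmoid _ _

theorem stmt_2 (x α : ℝ) (k : ℕ) (hk : 1 ≤ k) (hα : 2 ≤ α) (hx : k * α ≤ x) :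
    1 / 4 ≤ (∏ i ∈ Finset.Icc 1 k, Real.exp (x - i * α) / (1 + Real.exp (x - i * α)))
      ∧ (∏ i ∈ Finset.Icc 1 k, Real.exp (x - i * α) / (1 + Real.exp (x - i * α))) ≤ 1 :=
  stmt_2_general x α k hα hx
end

section
/- Let σ be the logistic sigmoid, α ≥ 2 real, k ≥ 1 an integer, and j ∈ {0,1,...,k-1}. If x ∈ [jα, (j+1)α], then ∏_{i=1}^k σ(x - iα) ≤ exp(-(α/2)·(k-j-1)(k-j)). -/
/-! Since σ ≤ 1, the factors with i ≤ j can be dropped; the remaining ones satisfy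
σ(t) ≤ exp t with t = x - iα ≤ -(i - j - 1)α, and summing these exponents gives
-(α/2)(k-j-1)(k-j). -/

open Finset

namespace Real

lemma exp_div_one_add_exp (t : ℝ) : exp t / (1 + exp t) = sigmoid t := by
  rw [sigmoid_def, exp_neg]
  field_simp
  ring

lemma sigmoid_le_exp (t : ℝ) : sigmoid t ≤ exp t := by
  have h : sigmoid t * exp (-t) ≤ 1 := (sigmoid_mul_rexp_neg t).trans_le (sigmoid_le_one _)
  rwa [exp_neg, ← div_eq_mul_inv, div_le_one (exp_pos t)] at h

end Real

lemma sum_Icc_succ_natCast_sub {j k : ℕ} (h : j ≤ k) :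
    ∑ i ∈ Icc (j + 1) k, ((i : ℝ) - (j + 1)) = ((k : ℝ) - j - 1) * (k - j) / 2 := by
  induction k, h using Nat.le_induction with
  | base => simp
  | succ k hjk ih =>
    rw [sum_Icc_succ_top (by omega), ih]
    push_cast
    ring

theorem stmt_3_general (x α : ℝ) (k j : ℕ) (hj : j < k)
    (hx : x ∈ Set.Icc ((j : ℝ) * α) (((j : ℝ) + 1) * α)) :
    (∏ i ∈ Finset.Icc 1 k, Real.exp (x - i * α) / (1 + Real.exp (x - i * α)))
      ≤ Real.exp (-(α / 2) * ((k : ℝ) - j - 1) * ((k : ℝ) - j)) := by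
  simp_rw [Real.exp_div_one_add_exp]
  have hexponent : ∑ i ∈ Icc (j + 1) k, (x - i * α)
      ≤ -(α / 2) * ((k : ℝ) - j - 1) * ((k : ℝ) - j) := by
    calc ∑ i ∈ Icc (j + 1) k, (x - i * α)
        ≤ ∑ i ∈ Icc (j + 1) k, -(α * ((i : ℝ) - (j + 1))) :=
          sum_le_sum fun i _ ↦ by linarith [hx.2]
      _ = _ := by rw [sum_neg_distrib, ← mul_sum, sum_Icc_succ_natCast_sub hj.le]; ring
  calc ∏ i ∈ Icc 1 k, Real.sigmoid (x - i * α)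
      ≤ ∏ i ∈ Icc (j + 1) k, Real.sigmoid (x - i * α) :=
        prod_le_prod_of_subset_of_le_one (Icc_subset_Icc_left (by omega))
          (fun _ _ ↦ Real.sigmoid_nonneg _) (fun _ _ _ ↦ Real.sigmoid_le_one _)
    _ ≤ ∏ i ∈ Icc (j + 1) k, Real.exp (x - i * α) :=
        prod_le_prod (fun _ _ ↦ Real.sigmoid_nonneg _) (fun _ _ ↦ Real.sigmoid_le_exp _)
    _ = Real.exp (∑ i ∈ Icc (j + 1) k, (x - i * α)) := (Real.exp_sum _ _).symm
    _ ≤ _ := Real.exp_le_exp.mpr hexponent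

theorem stmt_3 (x α : ℝ) (k j : ℕ) (hk : 1 ≤ k) (hα : 2 ≤ α) (hj : j < k)
    (hx : x ∈ Set.Icc ((j : ℝ) * α) (((j : ℝ) + 1) * α)) :
    (∏ i ∈ Finset.Icc 1 k, Real.exp (x - i * α) / (1 + Real.exp (x - i * α)))
      ≤ Real.exp (-(α / 2) * ((k : ℝ) - j - 1) * ((k : ℝ) - j)) :=
  stmt_3_general x α k j hj hx
end
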